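/- arXiv:2408.12730 — 5 statements merged into one kernel-verified Lean document; each statement's English description precedes it below -/
import Mathlib

section
/- Let n be a natural number, δ > 0, 0 < ε < 2δ, λ₁, λ₂ ∈ [0, 1], and c ∈ ℝ. Let S ⊆ (Fin n → ℝ) be a measurable set such that vol(S ∩ Box(c)) ≥ (1 − λ₁)·(2δ)^n and vol(Sᶜ ∩ Box(c − ε)) ≥ (1 − λ₂)·(2δ)^n, where vol denotes n-dimensional Lebesgue measure and Sᶜ is the complement of S. Then (λ₁ + λ₂)·(2δ)^n ≥ (2δ − ε)^n. -/
/-!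
The two boxes of side `2δ` centred at `c` and `c - ε` overlap in a box of side `2δ - ε`, so their
union has volume `2(2δ)^n - (2δ - ε)^n`. The sets `S ∩ Box(c)` and `Sᶜ ∩ Box(c - ε)` are disjoint
subsets of that union, so their volumes, at least `(1 - λ₁)(2δ)^n` and `(1 - λ₂)(2δ)^n`, add up to
at most `2(2δ)^n - (2δ - ε)^n`.
-/

open MeasureTheory Set

theorem setOf_forall_apply_mem_Icc_eq_Icc {ι α : Type*} [Preorder α] (a b : α) :
    {y : ι → α | ∀ i, y i ∈ Icc a b} = Icc (fun _ => a) (fun _ => b) := by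
  ext y
  simp [Pi.le_def, forall_and]

theorem Icc_inter_Icc_eq_of_le {α : Type*} [Lattice α] {a₁ a₂ b₁ b₂ : α} (ha : a₂ ≤ a₁)
    (hb : b₂ ≤ b₁) : Icc a₁ b₁ ∩ Icc a₂ b₂ = Icc a₁ b₂ := by
  rw [Icc_inter_Icc, sup_eq_left.2 ha, inf_eq_right.2 hb]

theorem Real.volume_real_Icc_const {ι : Type*} [Fintype ι] {a b : ℝ} (h : a ≤ b) :
    volume.real (Icc (fun _ : ι => a) (fun _ => b)) = (b - a) ^ Fintype.card ι := by
  rw [measureReal_def, Real.volume_Icc_pi_toReal fun _ => h, Finset.prod_const, Finset.card_univ]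

section

variable {α : Type*} [MeasurableSpace α] (μ : Measure α) {S : Set α}

theorem measure_inter_add_measure_compl_inter_le_union (hS : MeasurableSet S) (s t : Set α) :
    μ (S ∩ s) + μ (Sᶜ ∩ t) ≤ μ (s ∪ t) :=
  calc μ (S ∩ s) + μ (Sᶜ ∩ t) ≤ μ ((s ∪ t) ∩ S) + μ ((s ∪ t) \ S) :=
        add_le_add (measure_mono fun _ hy => ⟨.inl hy.2, hy.1⟩)
          (measure_mono fun _ hy => ⟨.inr hy.2, hy.1⟩)
    _ = μ (s ∪ t) := measure_inter_add_sdiff _ hS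

theorem measureReal_inter_add_measureReal_compl_inter_le (hS : MeasurableSet S) {s t : Set α}
    (ht : MeasurableSet t) (hs_fin : μ s ≠ ⊤) (ht_fin : μ t ≠ ⊤) :
    μ.real (S ∩ s) + μ.real (Sᶜ ∩ t) ≤ μ.real s + μ.real t - μ.real (s ∩ t) := by
  rw [← measureReal_union_add_inter ht hs_fin ht_fin, add_sub_cancel_right, measureReal_def,
    measureReal_def, ← ENNReal.toReal_add (measure_ne_top_of_subset inter_subset_right hs_fin)
      (measure_ne_top_of_subset inter_subset_right ht_fin)]
  exact ENNReal.toReal_mono (measure_union_ne_top hs_fin ht_fin)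
    (measure_inter_add_measure_compl_inter_le_union μ hS s t)

end

theorem two_point_distinguishing_general (n : ℕ) (δ ε : ℝ) (hε0 : 0 < ε)
    (hε : ε < 2 * δ) (lam₁ lam₂ : ℝ) (c : ℝ)
    (S : Set (Fin n → ℝ)) (hS : MeasurableSet S)
    (h₁ : ENNReal.ofReal ((1 - lam₁) * (2 * δ) ^ n) ≤
      MeasureTheory.volume (S ∩ {y : Fin n → ℝ | ∀ i, y i ∈ Set.Icc (c - δ) (c + δ)}))
    (h₂ : ENNReal.ofReal ((1 - lam₂) * (2 * δ) ^ n) ≤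
      MeasureTheory.volume
        (Sᶜ ∩ {y : Fin n → ℝ | ∀ i, y i ∈ Set.Icc (c - ε - δ) (c - ε + δ)})) :
    (2 * δ - ε) ^ n ≤ (lam₁ + lam₂) * (2 * δ) ^ n := by
  simp only [setOf_forall_apply_mem_Icc_eq_Icc] at h₁ h₂
  set B₁ : Set (Fin n → ℝ) := Icc (fun _ => c - δ) (fun _ => c + δ)
  set B₂ : Set (Fin n → ℝ) := Icc (fun _ => c - ε - δ) (fun _ => c - ε + δ)
  have hB₁ : volume.real B₁ = (2 * δ) ^ n := by
    rw [Real.volume_real_Icc_const (by linarith), Fintype.card_fin]; ring_nf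
  have hB₂ : volume.real B₂ = (2 * δ) ^ n := by
    rw [Real.volume_real_Icc_const (by linarith), Fintype.card_fin]; ring_nf
  have hB₁₂ : volume.real (B₁ ∩ B₂) = (2 * δ - ε) ^ n := by
    rw [Icc_inter_Icc_eq_of_le (fun _ => by linarith) (fun _ => by linarith),
      Real.volume_real_Icc_const (by linarith), Fintype.card_fin]; ring_nf
  have hB₁_fin : volume B₁ ≠ ⊤ := isCompact_Icc.measure_ne_top
  have hB₂_fin : volume B₂ ≠ ⊤ := isCompact_Icc.measure_ne_top
  have hS₁ : (1 - lam₁) * (2 * δ) ^ n ≤ volume.real (S ∩ B₁) :=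
    (ENNReal.ofReal_le_iff_le_toReal (measure_ne_top_of_subset inter_subset_right hB₁_fin)).1 h₁
  have hS₂ : (1 - lam₂) * (2 * δ) ^ n ≤ volume.real (Sᶜ ∩ B₂) :=
    (ENNReal.ofReal_le_iff_le_toReal (measure_ne_top_of_subset inter_subset_right hB₂_fin)).1 h₂
  have hunion := measureReal_inter_add_measureReal_compl_inter_le volume hS measurableSet_Icc
    hB₁_fin hB₂_fin
  linarith

/-- Two-point distinguishing lemma: if `S` occupies at least a `(1-λ₁)`-fraction of
`Box(c)` and its complement occupies at least a `(1-λ₂)`-fraction of `Box(c-ε)`,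
then `(λ₁ + λ₂)·(2δ)^n ≥ (2δ - ε)^n`. -/
theorem two_point_distinguishing (n : ℕ) (δ ε : ℝ) (hδ : 0 < δ) (hε0 : 0 < ε)
    (hε : ε < 2 * δ) (lam₁ lam₂ : ℝ) (hlam₁ : lam₁ ∈ Set.Icc (0 : ℝ) 1)
    (hlam₂ : lam₂ ∈ Set.Icc (0 : ℝ) 1) (c : ℝ)
    (S : Set (Fin n → ℝ)) (hS : MeasurableSet S)
    (h₁ : ENNReal.ofReal ((1 - lam₁) * (2 * δ) ^ n) ≤
      MeasureTheory.volume (S ∩ {y : Fin n → ℝ | ∀ i, y i ∈ Set.Icc (c - δ) (c + δ)}))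
    (h₂ : ENNReal.ofReal ((1 - lam₂) * (2 * δ) ^ n) ≤
      MeasureTheory.volume
        (Sᶜ ∩ {y : Fin n → ℝ | ∀ i, y i ∈ Set.Icc (c - ε - δ) (c - ε + δ)})) :
    (2 * δ - ε) ^ n ≤ (lam₁ + lam₂) * (2 * δ) ^ n :=
  two_point_distinguishing_general n δ ε hε0 hε lam₁ lam₂ c S hS h₁ h₂
end

section
/- Let n ≥ 1 be a natural number, δ > 0, 0 < ε < 2δ, a ≤ b real numbers, and λ₁, λ₂ ∈ [0, 1] with λ = max(λ₁, λ₂). Let S ⊆ (Fin n → ℝ) be a measurable set such that: (i) for every κ ∈ [a, b], vol(Sᶜ ∩ Box(κ)) ≤ λ₁·(2δ)^n, and (ii) for every κ with κ ≤ a − ε or κ ≥ b + ε, vol(S ∩ Box(κ)) ≤ λ₂·(2δ)^n, where vol denotes n-dimensional Lebesgue measure. Then 2λ·(2δ)^n ≥ (2δ − ε)^n, equivalently 2λ ≥ (1 − ε/(2δ))^n. -/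
/-- Measure-theoretic form of Kleinewächter's lower bound for two-error
root-identification tests: `2 max(λ₁,λ₂) · (2δ)^n ≥ (2δ - ε)^n`. -/
theorem two_error_test_bound (n : ℕ) (hn : 1 ≤ n) (δ ε : ℝ) (hδ : 0 < δ)
    (hε0 : 0 < ε) (hε : ε < 2 * δ) (a b : ℝ) (hab : a ≤ b)
    (lam₁ lam₂ : ℝ) (hlam₁ : lam₁ ∈ Set.Icc (0 : ℝ) 1) (hlam₂ : lam₂ ∈ Set.Icc (0 : ℝ) 1)
    (S : Set (Fin n → ℝ)) (hS : MeasurableSet S)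
    (hI : ∀ κ ∈ Set.Icc a b,
      MeasureTheory.volume (Sᶜ ∩ {y : Fin n → ℝ | ∀ i, y i ∈ Set.Icc (κ - δ) (κ + δ)}) ≤
        ENNReal.ofReal (lam₁ * (2 * δ) ^ n))
    (hII : ∀ κ : ℝ, (κ ≤ a - ε ∨ b + ε ≤ κ) →
      MeasureTheory.volume (S ∩ {y : Fin n → ℝ | ∀ i, y i ∈ Set.Icc (κ - δ) (κ + δ)}) ≤
        ENNReal.ofReal (lam₂ * (2 * δ) ^ n)) :
    (2 * δ - ε) ^ n ≤ 2 * max lam₁ lam₂ * (2 * δ) ^ n := by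
  have hvolI : MeasureTheory.volume {y : Fin n → ℝ | ∀ i, y i ∈ Set.Icc (a - δ) (a - ε + δ)}
      = ENNReal.ofReal ((2 * δ - ε) ^ n) := by
    have h1 : {y : Fin n → ℝ | ∀ i, y i ∈ Set.Icc (a - δ) (a - ε + δ)}
        = Set.pi Set.univ (fun _ : Fin n => Set.Icc (a - δ) (a - ε + δ)) := by
      ext y; simp only [Set.mem_setOf_eq, Set.mem_univ_pi]
    rw [h1, MeasureTheory.volume_pi_pi]
    simp only [Real.volume_Icc, Finset.prod_const, Finset.card_univ, Fintype.card_fin]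
    rw [← ENNReal.ofReal_pow (by linarith)]
    congr 1
    ring_nf
  have hsub : {y : Fin n → ℝ | ∀ i, y i ∈ Set.Icc (a - δ) (a - ε + δ)} ⊆
      (Sᶜ ∩ {y : Fin n → ℝ | ∀ i, y i ∈ Set.Icc (a - δ) (a + δ)}) ∪
      (S ∩ {y : Fin n → ℝ | ∀ i, y i ∈ Set.Icc (a - ε - δ) (a - ε + δ)}) := by
    intro y hy
    by_cases hyS : y ∈ S
    · right
      exact ⟨hyS, fun i => ⟨by linarith [(hy i).1], (hy i).2⟩⟩
    · left
      exact ⟨hyS, fun i => ⟨(hy i).1, by linarith [(hy i).2]⟩⟩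
  have h1 := hI a ⟨le_refl a, hab⟩
  have h2 := hII (a - ε) (Or.inl le_rfl)
  have hkey : ENNReal.ofReal ((2 * δ - ε) ^ n) ≤
      ENNReal.ofReal (lam₁ * (2 * δ) ^ n) + ENNReal.ofReal (lam₂ * (2 * δ) ^ n) := by
    calc ENNReal.ofReal ((2 * δ - ε) ^ n)
        = MeasureTheory.volume {y : Fin n → ℝ | ∀ i, y i ∈ Set.Icc (a - δ) (a - ε + δ)} :=
          hvolI.symm
      _ ≤ MeasureTheory.volume
            ((Sᶜ ∩ {y : Fin n → ℝ | ∀ i, y i ∈ Set.Icc (a - δ) (a + δ)}) ∪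
             (S ∩ {y : Fin n → ℝ | ∀ i, y i ∈ Set.Icc (a - ε - δ) (a - ε + δ)})) :=
          MeasureTheory.measure_mono hsub
      _ ≤ _ + _ := MeasureTheory.measure_union_le _ _
      _ ≤ _ := add_le_add h1 h2
  rw [← ENNReal.ofReal_add (mul_nonneg hlam₁.1 (by positivity)) (mul_nonneg hlam₂.1 (by positivity)),
    ENNReal.ofReal_le_ofReal_iff (add_nonneg (mul_nonneg hlam₁.1 (by positivity)) (mul_nonneg hlam₂.1 (by positivity)))] at hkey
  have hpow : (0:ℝ) ≤ (2 * δ) ^ n := by positivity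
  have hm1 : lam₁ ≤ max lam₁ lam₂ := le_max_left _ _
  have hm2 : lam₂ ≤ max lam₁ lam₂ := le_max_right _ _
  nlinarith [mul_le_mul_of_nonneg_right hm1 hpow, mul_le_mul_of_nonneg_right hm2 hpow]
end

section
/- Let n ≥ 1 be a natural number, δ > 0, 0 < ε < 2δ, a ≤ b real numbers, and λ₁, λ₂ ∈ [0, 1] with λ = max(λ₁, λ₂) satisfying 0 < λ < 1/2. Let S ⊆ (Fin n → ℝ) be a measurable set such that: (i) for every κ ∈ [a, b], vol(Sᶜ ∩ Box(κ)) ≤ λ₁·(2δ)^n, and (ii) for every κ with κ ≤ a − ε or κ ≥ b + ε, vol(S ∩ Box(κ)) ≤ λ₂·(2δ)^n, where vol denotes n-dimensional Lebesgue measure. Then the number of observations satisfies n ≥ log(2λ) / log(1 − ε/(2δ)). -/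
/-!
A point configuration in the overlap of the cubes `Box(a)` and `Box(a - ε)`, a cube of side
`2δ - ε`, must be accepted for the root `a ∈ [a, b]` and rejected for the root `a - ε`. One of
the two errors is therefore committed on that overlap, so `(2δ - ε)^n ≤ (λ₁ + λ₂)(2δ)^n ≤ 2λ(2δ)^n`,
i.e. `(1 - ε/(2δ))^n ≤ 2λ`; taking logarithms of base `1 - ε/(2δ) < 1` gives the bound.
-/

open MeasureTheory Set

theorem measure_inter_le_compl_inter_add_inter {α : Type*} [MeasurableSpace α] (μ : Measure α)
    (S : Set α) {A B : Set α} : μ (A ∩ B) ≤ μ (Sᶜ ∩ A) + μ (S ∩ B) :=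
  calc μ (A ∩ B) ≤ μ ((A ∩ B) \ S) + μ (A ∩ B ∩ S) := by
        rw [add_comm]; exact measure_le_inter_add_sdiff μ _ S
    _ ≤ μ (Sᶜ ∩ A) + μ (S ∩ B) :=
      add_le_add (measure_mono fun _ hy => ⟨hy.2, hy.1.1⟩)
        (measure_mono fun _ hy => ⟨hy.2, hy.1.2⟩)

theorem setOf_forall_mem_Icc_eq_Icc {ι : Type*} (l u : ℝ) :
    {y : ι → ℝ | ∀ i, y i ∈ Icc l u} = Icc (fun _ => l) (fun _ => u) := by
  ext y
  simp only [mem_ofPred_eq, mem_Icc, Pi.le_def, forall_and]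

theorem volume_cube_inter_cube {ι : Type*} [Fintype ι] {c c' δ : ℝ} (hc : c' ≤ c)
    (hδ : c - c' ≤ 2 * δ) :
    volume ({y : ι → ℝ | ∀ i, y i ∈ Icc (c - δ) (c + δ)} ∩
        {y : ι → ℝ | ∀ i, y i ∈ Icc (c' - δ) (c' + δ)}) =
      ENNReal.ofReal ((2 * δ - (c - c')) ^ Fintype.card ι) := by
  rw [setOf_forall_mem_Icc_eq_Icc, setOf_forall_mem_Icc_eq_Icc, Icc_inter_Icc, Real.volume_Icc_pi,
    ENNReal.ofReal_pow (by linarith)]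
  simp only [Pi.sup_apply, Pi.inf_apply, max_eq_left (by linarith : c' - δ ≤ c - δ),
    min_eq_right (by linarith : c' + δ ≤ c + δ), Finset.prod_const, Finset.card_univ]
  ring_nf

theorem Real.log_div_log_le_of_pow_le {r x : ℝ} {n : ℕ} (hr0 : 0 < r) (hr1 : r < 1)
    (h : r ^ n ≤ x) : Real.log x / Real.log r ≤ n := by
  rw [div_le_iff_of_neg (Real.log_neg hr0 hr1), ← Real.log_pow]
  exact Real.log_le_log (pow_pos hr0 n) h

theorem two_error_test_log_bound_general (n : ℕ) (δ ε : ℝ) (hδ : 0 < δ)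
    (hε0 : 0 < ε) (hε : ε < 2 * δ) (a b : ℝ) (hab : a ≤ b)
    (lam₁ lam₂ : ℝ) (hlam₁ : lam₁ ∈ Set.Icc (0 : ℝ) 1) (hlam₂ : lam₂ ∈ Set.Icc (0 : ℝ) 1)
    (S : Set (Fin n → ℝ))
    (hI : ∀ κ ∈ Set.Icc a b,
      MeasureTheory.volume (Sᶜ ∩ {y : Fin n → ℝ | ∀ i, y i ∈ Set.Icc (κ - δ) (κ + δ)}) ≤
        ENNReal.ofReal (lam₁ * (2 * δ) ^ n))
    (hII : ∀ κ : ℝ, (κ ≤ a - ε ∨ b + ε ≤ κ) →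
      MeasureTheory.volume (S ∩ {y : Fin n → ℝ | ∀ i, y i ∈ Set.Icc (κ - δ) (κ + δ)}) ≤
        ENNReal.ofReal (lam₂ * (2 * δ) ^ n)) :
    Real.log (2 * max lam₁ lam₂) / Real.log (1 - ε / (2 * δ)) ≤ (n : ℝ) := by
  have hside : 0 < 2 * δ := by linarith
  have hoverlap : ENNReal.ofReal ((2 * δ - ε) ^ n) ≤
      ENNReal.ofReal (lam₁ * (2 * δ) ^ n) + ENNReal.ofReal (lam₂ * (2 * δ) ^ n) := by
    have hvol := volume_cube_inter_cube (ι := Fin n) (c := a) (c' := a - ε) (δ := δ)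
      (by linarith) (by linarith)
    rw [sub_sub_cancel, Fintype.card_fin] at hvol
    rw [← hvol]
    exact (measure_inter_le_compl_inter_add_inter volume S).trans
      (add_le_add (hI a ⟨le_rfl, hab⟩) (hII (a - ε) (Or.inl le_rfl)))
  have hpow : (2 * δ - ε) ^ n ≤ 2 * max lam₁ lam₂ * (2 * δ) ^ n := by
    rw [← ENNReal.ofReal_add (mul_nonneg hlam₁.1 (by positivity))
      (mul_nonneg hlam₂.1 (by positivity)),
      ENNReal.ofReal_le_ofReal_iff (by nlinarith [hlam₁.1, hlam₂.1, pow_pos hside n])]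
      at hoverlap
    nlinarith [le_max_left lam₁ lam₂, le_max_right lam₁ lam₂, pow_pos hside n]
  have hratio : 0 < ε / (2 * δ) ∧ ε / (2 * δ) < 1 :=
    ⟨div_pos hε0 hside, (div_lt_one hside).mpr hε⟩
  refine Real.log_div_log_le_of_pow_le (by linarith) (by linarith) ?_
  rwa [one_sub_div hside.ne', div_pow, div_le_iff₀ (pow_pos hside n)]

/-- Kleinewächter's logarithmic lower bound on the number of observations for a
two-error root-identification test: `n ≥ log(2λ) / log(1 - ε/(2δ))`. -/
theorem two_error_test_log_bound (n : ℕ) (hn : 1 ≤ n) (δ ε : ℝ) (hδ : 0 < δ)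
    (hε0 : 0 < ε) (hε : ε < 2 * δ) (a b : ℝ) (hab : a ≤ b)
    (lam₁ lam₂ : ℝ) (hlam₁ : lam₁ ∈ Set.Icc (0 : ℝ) 1) (hlam₂ : lam₂ ∈ Set.Icc (0 : ℝ) 1)
    (hlam0 : 0 < max lam₁ lam₂) (hlam : max lam₁ lam₂ < 1 / 2)
    (S : Set (Fin n → ℝ)) (hS : MeasurableSet S)
    (hI : ∀ κ ∈ Set.Icc a b,
      MeasureTheory.volume (Sᶜ ∩ {y : Fin n → ℝ | ∀ i, y i ∈ Set.Icc (κ - δ) (κ + δ)}) ≤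
        ENNReal.ofReal (lam₁ * (2 * δ) ^ n))
    (hII : ∀ κ : ℝ, (κ ≤ a - ε ∨ b + ε ≤ κ) →
      MeasureTheory.volume (S ∩ {y : Fin n → ℝ | ∀ i, y i ∈ Set.Icc (κ - δ) (κ + δ)}) ≤
        ENNReal.ofReal (lam₂ * (2 * δ) ^ n)) :
    Real.log (2 * max lam₁ lam₂) / Real.log (1 - ε / (2 * δ)) ≤ (n : ℝ) :=
  two_error_test_log_bound_general n δ ε hδ hε0 hε a b hab lam₁ lam₂ hlam₁ hlam₂ S hI hII
end

section
/- Let n be a natural number, δ > 0, real numbers ε₁, ε₂ with 0 < 2ε₁ < ε₂ < 2δ, a ∈ ℝ, and λ₁, λ₂, λ₃ ∈ [0, 1] with λ = max(λ₁, λ₂, λ₃). Let S ⊆ (Fin n → ℝ) be a measurable set (the acceptance region of the test with three errors) such that: (i) vol(S ∩ Box(a)) > (1 − λ₁)·(2δ)^n (the test accepts at the root a with probability > 1 − λ₁); (ii) vol(Sᶜ ∩ Box(a − ε₂)) > (1 − λ₂)·(2δ)^n (the test rejects at a − ε₂ with probability > 1 − λ₂); (iii) vol(S ∩ Box(a − ε₂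 + ε₁)) > (1 − λ₃)·(2δ)^n (the test accepts at a − ε₂ + ε₁ with probability > 1 − λ₃); and (iv) vol(Sᶜ ∩ Box(a − ε₁)) > (1 − λ₃)·(2δ)^n (the test rejects at a − ε₁ with probability > 1 − λ₃). Then 6λ·(2δ)^n ≥ 2·(2δ − ε₁)^n + (2δ − ε₂)^n, equivalently 6λ ≥ 2·(1 − ε₁/(2δ))^n + (1 − ε₂/(2δ))^n. -/
/-!
The overlap of two cubes of side `2δ` whose centres are `ε ≤ 2δ` apart has volume `(2δ - ε)^n`,
and each of its points is an error of the test at one of the two centres; so if the test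
distinguishes the two centres with errors `λᵢ, λⱼ`, then `(2δ - ε)^n < (λᵢ + λⱼ)(2δ)^n`.
Adding this bound for the three pairs `(a, a - ε₁)`, `(a - ε₂ + ε₁, a - ε₂)`, `(a, a - ε₂)`
counts every `λᵢ` twice, and `2(λ₁ + λ₂ + λ₃) ≤ 6λ`.
-/

open MeasureTheory Set

lemma ENNReal.lt_toReal_of_ofReal_lt {x : ℝ} {b : ENNReal} (hb : b ≠ ⊤)
    (h : ENNReal.ofReal x < b) : x < b.toReal :=
  (le_max_left x 0).trans_lt (ENNReal.toReal_strict_mono hb h)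

section TwoPointTest

variable {α : Type*} [MeasurableSpace α] {μ : Measure α} {S B : Set α}

lemma measureReal_compl_inter_lt (hS : MeasurableSet S) (hB : μ B ≠ ⊤) {l : ℝ}
    (h : (1 - l) * μ.real B < μ.real (S ∩ B)) : μ.real (Sᶜ ∩ B) < l * μ.real B := by
  have hsplit := measureReal_inter_add_sdiff (μ := μ) hS hB
  rw [inter_comm, sdiff_eq_compl_inter] at hsplit
  linarith

lemma measureReal_inter_lt_of_accept_reject (hS : MeasurableSet S) {B₁ B₂ : Set α}
    (hB₁ : μ B₁ ≠ ⊤) (hB₂ : μ B₂ ≠ ⊤) {l₁ l₂ : ℝ}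
    (h₁ : (1 - l₁) * μ.real B₁ < μ.real (S ∩ B₁))
    (h₂ : (1 - l₂) * μ.real B₂ < μ.real (Sᶜ ∩ B₂)) :
    μ.real (B₁ ∩ B₂) < l₁ * μ.real B₁ + l₂ * μ.real B₂ := by
  have hreject₁ := measureReal_compl_inter_lt hS hB₁ h₁
  have haccept₂ := measureReal_compl_inter_lt hS.compl hB₂ h₂
  rw [compl_compl] at haccept₂
  have hcover : B₁ ∩ B₂ ⊆ (Sᶜ ∩ B₁) ∪ (S ∩ B₂) := by
    rintro y ⟨hy₁, hy₂⟩
    by_cases hy : y ∈ S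
    · exact Or.inr ⟨hy, hy₂⟩
    · exact Or.inl ⟨hy, hy₁⟩
  calc μ.real (B₁ ∩ B₂)
      ≤ μ.real ((Sᶜ ∩ B₁) ∪ (S ∩ B₂)) :=
        measureReal_mono hcover (measure_union_ne_top
          (measure_ne_top_of_subset inter_subset_right hB₁)
          (measure_ne_top_of_subset inter_subset_right hB₂))
    _ ≤ μ.real (Sᶜ ∩ B₁) + μ.real (S ∩ B₂) := measureReal_union_le _ _
    _ < l₁ * μ.real B₁ + l₂ * μ.real B₂ := add_lt_add hreject₁ haccept₂

end TwoPointTest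

def cube (n : ℕ) (c δ : ℝ) : Set (Fin n → ℝ) := {y | ∀ i, y i ∈ Icc (c - δ) (c + δ)}

lemma cube_eq_Icc (n : ℕ) (c δ : ℝ) :
    cube n c δ = Icc (fun _ => c - δ) (fun _ => c + δ) := by
  ext y
  simp only [cube, mem_ofPred_eq, mem_Icc, Pi.le_def, forall_and]

lemma volume_cube_inter_cube_s6 (n : ℕ) (c₁ c₂ δ : ℝ) :
    volume (cube n c₁ δ ∩ cube n c₂ δ) = ENNReal.ofReal (2 * δ - |c₁ - c₂|) ^ n := by
  rw [cube_eq_Icc, cube_eq_Icc, Icc_inter_Icc, Real.volume_Icc_pi]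
  simp only [Pi.sup_apply, Pi.inf_apply, Finset.prod_const, Finset.card_univ, Fintype.card_fin]
  congr 2
  rcases le_total c₁ c₂ with h | h
  · simp [h, abs_of_nonpos (sub_nonpos.2 h)]; ring
  · simp [h, abs_of_nonneg (sub_nonneg.2 h)]; ring

lemma volume_cube (n : ℕ) (c δ : ℝ) : volume (cube n c δ) = ENNReal.ofReal (2 * δ) ^ n := by
  simpa using volume_cube_inter_cube_s6 n c c δ

lemma volume_cube_ne_top (n : ℕ) (c δ : ℝ) : volume (cube n c δ) ≠ ⊤ :=
  volume_cube n c δ ▸ ENNReal.pow_ne_top ENNReal.ofReal_ne_top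

lemma volume_real_cube_inter_cube {n : ℕ} {c₁ c₂ δ : ℝ} (h : |c₁ - c₂| ≤ 2 * δ) :
    volume.real (cube n c₁ δ ∩ cube n c₂ δ) = (2 * δ - |c₁ - c₂|) ^ n := by
  rw [measureReal_def, volume_cube_inter_cube_s6, ENNReal.toReal_pow,
    ENNReal.toReal_ofReal (sub_nonneg.2 h)]

lemma volume_real_cube {n : ℕ} {c δ : ℝ} (hδ : 0 ≤ δ) :
    volume.real (cube n c δ) = (2 * δ) ^ n := by
  simpa using volume_real_cube_inter_cube (n := n) (c₁ := c) (c₂ := c) (by simpa using hδ)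

lemma cube_test_bound {n : ℕ} {S : Set (Fin n → ℝ)} (hS : MeasurableSet S) {c₁ c₂ δ l₁ l₂ : ℝ}
    (hc : |c₁ - c₂| ≤ 2 * δ)
    (h₁ : ENNReal.ofReal ((1 - l₁) * (2 * δ) ^ n) < volume (S ∩ cube n c₁ δ))
    (h₂ : ENNReal.ofReal ((1 - l₂) * (2 * δ) ^ n) < volume (Sᶜ ∩ cube n c₂ δ)) :
    (2 * δ - |c₁ - c₂|) ^ n < (l₁ + l₂) * (2 * δ) ^ n := by
  have hδ : 0 ≤ δ := by linarith [abs_nonneg (c₁ - c₂)]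
  have hreal {T : Set (Fin n → ℝ)} {c l : ℝ}
      (h : ENNReal.ofReal ((1 - l) * (2 * δ) ^ n) < volume (T ∩ cube n c δ)) :
      (1 - l) * volume.real (cube n c δ) < volume.real (T ∩ cube n c δ) := by
    rw [volume_real_cube hδ]
    exact ENNReal.lt_toReal_of_ofReal_lt
      (measure_ne_top_of_subset inter_subset_right (volume_cube_ne_top n c δ)) h
  have := measureReal_inter_lt_of_accept_reject hS (volume_cube_ne_top n c₁ δ)
    (volume_cube_ne_top n c₂ δ) (hreal h₁) (hreal h₂)
  rwa [volume_real_cube_inter_cube hc, volume_real_cube hδ, volume_real_cube hδ, ← add_mul] at this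

theorem three_error_test_bound_general (n : ℕ) (δ ε₁ ε₂ : ℝ)
    (hε₁ : 0 < 2 * ε₁) (hε₁₂ : 2 * ε₁ < ε₂) (hε₂ : ε₂ < 2 * δ) (a : ℝ)
    (lam₁ lam₂ lam₃ : ℝ)
    (S : Set (Fin n → ℝ)) (hS : MeasurableSet S)
    (h₁ : ENNReal.ofReal ((1 - lam₁) * (2 * δ) ^ n) <
      MeasureTheory.volume (S ∩ {y : Fin n → ℝ | ∀ i, y i ∈ Set.Icc (a - δ) (a + δ)}))
    (h₂ : ENNReal.ofReal ((1 - lam₂) * (2 * δ) ^ n) <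
      MeasureTheory.volume
        (Sᶜ ∩ {y : Fin n → ℝ | ∀ i, y i ∈ Set.Icc (a - ε₂ - δ) (a - ε₂ + δ)}))
    (h₃ : ENNReal.ofReal ((1 - lam₃) * (2 * δ) ^ n) <
      MeasureTheory.volume
        (S ∩ {y : Fin n → ℝ | ∀ i, y i ∈ Set.Icc (a - ε₂ + ε₁ - δ) (a - ε₂ + ε₁ + δ)}))
    (h₄ : ENNReal.ofReal ((1 - lam₃) * (2 * δ) ^ n) <
      MeasureTheory.volume
        (Sᶜ ∩ {y : Fin n → ℝ | ∀ i, y i ∈ Set.Icc (a - ε₁ - δ) (a - ε₁ + δ)})) :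
    2 * (2 * δ - ε₁) ^ n + (2 * δ - ε₂) ^ n ≤
      6 * max lam₁ (max lam₂ lam₃) * (2 * δ) ^ n := by
  have hε₁_abs : |ε₁| ≤ 2 * δ := by rw [abs_of_pos (by linarith)]; linarith
  have hε₂_abs : |ε₂| ≤ 2 * δ := by rw [abs_of_pos (by linarith)]; linarith
  have k₁ := cube_test_bound hS (c₁ := a) (c₂ := a - ε₁) (by rwa [sub_sub_cancel]) h₁ h₄
  have k₂ := cube_test_bound hS (c₁ := a - ε₂ + ε₁) (c₂ := a - ε₂)
    (by rwa [add_sub_cancel_left]) h₃ h₂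
  have k₃ := cube_test_bound hS (c₁ := a) (c₂ := a - ε₂) (by rwa [sub_sub_cancel]) h₁ h₂
  rw [sub_sub_cancel, abs_of_pos (by linarith)] at k₁ k₃
  rw [add_sub_cancel_left, abs_of_pos (by linarith)] at k₂
  have hV : 0 ≤ (2 * δ) ^ n := pow_nonneg (by linarith) n
  have hmax : lam₁ + lam₂ + lam₃ ≤ 3 * max lam₁ (max lam₂ lam₃) := by
    linarith [le_max_left lam₁ (max lam₂ lam₃), le_max_left lam₂ lam₃,
      le_max_right lam₂ lam₃, le_max_right lam₁ (max lam₂ lam₃)]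
  linarith [mul_le_mul_of_nonneg_right hmax hV]

/-- Main theorem (three-error test lower bound): a test distinguishing the pairs
`(a, a-ε₁)`, `(a-ε₂+ε₁, a-ε₂)` and `(a, a-ε₂)` satisfies
`6λ·(2δ)^n ≥ 2·(2δ-ε₁)^n + (2δ-ε₂)^n` where `λ = max(λ₁,λ₂,λ₃)`. -/
theorem three_error_test_bound (n : ℕ) (δ ε₁ ε₂ : ℝ) (hδ : 0 < δ)
    (hε₁ : 0 < 2 * ε₁) (hε₁₂ : 2 * ε₁ < ε₂) (hε₂ : ε₂ < 2 * δ) (a : ℝ)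
    (lam₁ lam₂ lam₃ : ℝ) (hlam₁ : lam₁ ∈ Set.Icc (0 : ℝ) 1)
    (hlam₂ : lam₂ ∈ Set.Icc (0 : ℝ) 1) (hlam₃ : lam₃ ∈ Set.Icc (0 : ℝ) 1)
    (S : Set (Fin n → ℝ)) (hS : MeasurableSet S)
    (h₁ : ENNReal.ofReal ((1 - lam₁) * (2 * δ) ^ n) <
      MeasureTheory.volume (S ∩ {y : Fin n → ℝ | ∀ i, y i ∈ Set.Icc (a - δ) (a + δ)}))
    (h₂ : ENNReal.ofReal ((1 - lam₂) * (2 * δ) ^ n) <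
      MeasureTheory.volume
        (Sᶜ ∩ {y : Fin n → ℝ | ∀ i, y i ∈ Set.Icc (a - ε₂ - δ) (a - ε₂ + δ)}))
    (h₃ : ENNReal.ofReal ((1 - lam₃) * (2 * δ) ^ n) <
      MeasureTheory.volume
        (S ∩ {y : Fin n → ℝ | ∀ i, y i ∈ Set.Icc (a - ε₂ + ε₁ - δ) (a - ε₂ + ε₁ + δ)}))
    (h₄ : ENNReal.ofReal ((1 - lam₃) * (2 * δ) ^ n) <
      MeasureTheory.volume
        (Sᶜ ∩ {y : Fin n → ℝ | ∀ i, y i ∈ Set.Icc (a - ε₁ - δ) (a - ε₁ + δ)})) :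
    2 * (2 * δ - ε₁) ^ n + (2 * δ - ε₂) ^ n ≤
      6 * max lam₁ (max lam₂ lam₃) * (2 * δ) ^ n :=
  three_error_test_bound_general n δ ε₁ ε₂ hε₁ hε₁₂ hε₂ a lam₁ lam₂ lam₃ S hS h₁ h₂ h₃ h₄
end

section
/- Let n be a natural number, δ > 0, 0 < ε₂ < 2δ, a ∈ ℝ, and λ ∈ [0, 1]. Let S ⊆ (Fin n → ℝ) be a measurable set such that vol(S ∩ Box(a)) > (1 − λ)·(2δ)^n, vol(Sᶜ ∩ Box(a)) > (1 − λ)·(2δ)^n, vol(S ∩ Box(a − ε₂)) > (1 − λ)·(2δ)^n, and vol(Sᶜ ∩ Box(a − ε₂)) > (1 − λ)·(2δ)^n, where vol denotes n-dimensional Lebesgue measure (these are the three-error test conditions in the degenerate case ε₁ = 0, where the accept and reject regions at distance ε₁ collapse onto the same points). Then 6λ·(2δ)^n ≥ 2·(2δ)^n + (2δ − ε₂)^n, equivalently 6λ ≥ 2 + (1 − ε₂/(2δ))^n; in particular λ > 1/3. -/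
/-- Degenerate case `ε₁ = 0` of the three-error test bound:
`6λ·(2δ)^n ≥ 2·(2δ)^n + (2δ - ε₂)^n`, and in particular `λ > 1/3`. -/
theorem three_error_test_bound_degenerate (n : ℕ) (δ ε₂ : ℝ) (hδ : 0 < δ)
    (hε₂0 : 0 < ε₂) (hε₂ : ε₂ < 2 * δ) (a : ℝ) (lam : ℝ)
    (hlam : lam ∈ Set.Icc (0 : ℝ) 1)
    (S : Set (Fin n → ℝ)) (hS : MeasurableSet S)
    (h₁ : ENNReal.ofReal ((1 - lam) * (2 * δ) ^ n) <
      MeasureTheory.volume (S ∩ {y : Fin n → ℝ | ∀ i, y i ∈ Set.Icc (a - δ) (a + δ)}))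
    (h₂ : ENNReal.ofReal ((1 - lam) * (2 * δ) ^ n) <
      MeasureTheory.volume (Sᶜ ∩ {y : Fin n → ℝ | ∀ i, y i ∈ Set.Icc (a - δ) (a + δ)}))
    (h₃ : ENNReal.ofReal ((1 - lam) * (2 * δ) ^ n) <
      MeasureTheory.volume
        (S ∩ {y : Fin n → ℝ | ∀ i, y i ∈ Set.Icc (a - ε₂ - δ) (a - ε₂ + δ)}))
    (h₄ : ENNReal.ofReal ((1 - lam) * (2 * δ) ^ n) <
      MeasureTheory.volume
        (Sᶜ ∩ {y : Fin n → ℝ | ∀ i, y i ∈ Set.Icc (a - ε₂ - δ) (a - ε₂ + δ)})) :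
    2 * (2 * δ) ^ n + (2 * δ - ε₂) ^ n ≤ 6 * lam * (2 * δ) ^ n ∧ 1 / 3 < lam := by
  classical
  obtain ⟨hlam0, hlam1⟩ := hlam
  set B1 : Set (Fin n → ℝ) := {y | ∀ i, y i ∈ Set.Icc (a - δ) (a + δ)} with hB1def
  set B2 : Set (Fin n → ℝ) := {y | ∀ i, y i ∈ Set.Icc (a - ε₂ - δ) (a - ε₂ + δ)} with hB2def
  have h2δ : (0:ℝ) ≤ 2 * δ := by linarith
  have hWpos : (0:ℝ) < 2 * δ - ε₂ := by linarith
  set V : ℝ := (2 * δ) ^ n with hVdef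
  set W : ℝ := (2 * δ - ε₂) ^ n with hWdef
  have hV0 : (0:ℝ) < V := by positivity
  have hW0 : (0:ℝ) < W := by positivity
  have hWV : W ≤ V := pow_le_pow_left₀ (le_of_lt hWpos) (by linarith) n
  have hB1eq : B1 = Set.pi Set.univ fun _ => Set.Icc (a - δ) (a + δ) := by
    ext y; rw [Set.mem_univ_pi]; rfl
  have hB2eq : B2 = Set.pi Set.univ fun _ => Set.Icc (a - ε₂ - δ) (a - ε₂ + δ) := by
    ext y; rw [Set.mem_univ_pi]; rfl
  have hB1m : MeasurableSet B1 := by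
    rw [hB1eq]; exact MeasurableSet.univ_pi fun _ => measurableSet_Icc
  have hvol1 : MeasureTheory.volume B1 = ENNReal.ofReal V := by
    rw [hB1eq, MeasureTheory.volume_pi_pi]
    have : a + δ - (a - δ) = 2 * δ := by ring
    rw [Real.volume_Icc] at *
    simp only [this, Finset.prod_const, Finset.card_univ, Fintype.card_fin]
    rw [hVdef, ENNReal.ofReal_pow h2δ]
  have hvol2 : MeasureTheory.volume B2 = ENNReal.ofReal V := by
    rw [hB2eq, MeasureTheory.volume_pi_pi]
    have : a - ε₂ + δ - (a - ε₂ - δ) = 2 * δ := by ring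
    simp only [Real.volume_Icc, this, Finset.prod_const, Finset.card_univ, Fintype.card_fin]
    rw [hVdef, ENNReal.ofReal_pow h2δ]
  have hvol12 : MeasureTheory.volume (B2 ∩ B1) = ENNReal.ofReal W := by
    rw [hB1eq, hB2eq, ← Set.pi_inter_distrib]
    have hicc : Set.Icc (a - ε₂ - δ) (a - ε₂ + δ) ∩ Set.Icc (a - δ) (a + δ)
        = Set.Icc (a - δ) (a - ε₂ + δ) := by
      rw [Set.Icc_inter_Icc, max_eq_right (by linarith), min_eq_left (by linarith)]
    simp only [hicc]
    rw [MeasureTheory.volume_pi_pi]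
    have : a - ε₂ + δ - (a - δ) = 2 * δ - ε₂ := by ring
    simp only [Real.volume_Icc, this, Finset.prod_const, Finset.card_univ, Fintype.card_fin]
    rw [hWdef, ENNReal.ofReal_pow (le_of_lt hWpos)]
  -- partition identities
  have key1 : MeasureTheory.volume (B1 ∩ S) + MeasureTheory.volume (B1 \ S)
      = ENNReal.ofReal V := by
    rw [MeasureTheory.measure_inter_add_diff B1 hS, hvol1]
  have key2 : MeasureTheory.volume (B2 ∩ S) + MeasureTheory.volume (B2 \ S)
      = ENNReal.ofReal V := by
    rw [MeasureTheory.measure_inter_add_diff B2 hS, hvol2]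
  have key3 : MeasureTheory.volume ((B2 ∩ B1) ∩ S) + MeasureTheory.volume ((B2 ∩ B1) \ S)
      = ENNReal.ofReal W := by
    rw [MeasureTheory.measure_inter_add_diff _ hS, hvol12]
  have key4 : MeasureTheory.volume (B2 ∩ B1) + MeasureTheory.volume (B2 \ B1)
      = ENNReal.ofReal V := by
    rw [MeasureTheory.measure_inter_add_diff B2 hB1m, hvol2]
  -- finiteness
  have hfin : ∀ T : Set (Fin n → ℝ), T ⊆ B1 ∪ B2 → MeasureTheory.volume T ≠ ⊤ := by
    intro T hT
    have : MeasureTheory.volume T ≤ ENNReal.ofReal V + ENNReal.ofReal V := by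
      calc MeasureTheory.volume T ≤ MeasureTheory.volume (B1 ∪ B2) :=
            MeasureTheory.measure_mono hT
        _ ≤ MeasureTheory.volume B1 + MeasureTheory.volume B2 :=
            MeasureTheory.measure_union_le _ _
        _ = _ := by rw [hvol1, hvol2]
    exact ne_top_of_le_ne_top (by simp) this
  have f1 : MeasureTheory.volume (B1 ∩ S) ≠ ⊤ := hfin _ (fun y hy => Or.inl hy.1)
  have f2 : MeasureTheory.volume (B1 \ S) ≠ ⊤ := hfin _ (fun y hy => Or.inl hy.1)
  have f3 : MeasureTheory.volume (B2 ∩ S) ≠ ⊤ := hfin _ (fun y hy => Or.inr hy.1)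
  have f4 : MeasureTheory.volume (B2 \ S) ≠ ⊤ := hfin _ (fun y hy => Or.inr hy.1)
  have f5 : MeasureTheory.volume ((B2 ∩ B1) ∩ S) ≠ ⊤ := hfin _ (fun y hy => Or.inr hy.1.1)
  have f6 : MeasureTheory.volume ((B2 ∩ B1) \ S) ≠ ⊤ := hfin _ (fun y hy => Or.inr hy.1.1)
  have f7 : MeasureTheory.volume (B2 \ B1) ≠ ⊤ := hfin _ (fun y hy => Or.inr hy.1)
  -- real versions
  set x1 := (MeasureTheory.volume (B1 ∩ S)).toReal
  set x2 := (MeasureTheory.volume (B1 \ S)).toReal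
  set x3 := (MeasureTheory.volume (B2 ∩ S)).toReal
  set x4 := (MeasureTheory.volume (B2 \ S)).toReal
  set p := (MeasureTheory.volume ((B2 ∩ B1) ∩ S)).toReal
  set q := (MeasureTheory.volume ((B2 ∩ B1) \ S)).toReal
  set d := (MeasureTheory.volume (B2 \ B1)).toReal
  have hc : (0:ℝ) ≤ (1 - lam) * (2 * δ) ^ n :=
    mul_nonneg (by linarith) (pow_nonneg h2δ n)
  have hx1 : (1 - lam) * V < x1 := by
    rw [Set.inter_comm] at h₁
    exact (ENNReal.ofReal_lt_iff_lt_toReal hc f1).mp h₁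
  have hx2 : (1 - lam) * V < x2 := by
    rw [Set.inter_comm, ← Set.diff_eq] at h₂
    exact (ENNReal.ofReal_lt_iff_lt_toReal hc f2).mp h₂
  have hx3 : (1 - lam) * V < x3 := by
    rw [Set.inter_comm] at h₃
    exact (ENNReal.ofReal_lt_iff_lt_toReal hc f3).mp h₃
  have hx4 : (1 - lam) * V < x4 := by
    rw [Set.inter_comm, ← Set.diff_eq] at h₄
    exact (ENNReal.ofReal_lt_iff_lt_toReal hc f4).mp h₄
  have e1 : x1 + x2 = V := by
    have := congrArg ENNReal.toReal key1
    rwa [ENNReal.toReal_add f1 f2, ENNReal.toReal_ofReal (le_of_lt hV0)] at this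
  have e2 : x3 + x4 = V := by
    have := congrArg ENNReal.toReal key2
    rwa [ENNReal.toReal_add f3 f4, ENNReal.toReal_ofReal (le_of_lt hV0)] at this
  have e3 : p + q = W := by
    have := congrArg ENNReal.toReal key3
    rwa [ENNReal.toReal_add f5 f6, ENNReal.toReal_ofReal (le_of_lt hW0)] at this
  have e4 : W + d = V := by
    have := congrArg ENNReal.toReal key4
    rwa [ENNReal.toReal_add (by rw [hvol12]; simp) f7, hvol12,
      ENNReal.toReal_ofReal (le_of_lt hW0), ENNReal.toReal_ofReal (le_of_lt hV0)] at this
  -- covering inequalities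
  have cover : ∀ T : Set (Fin n → ℝ), B2 ∩ T ⊆ ((B2 ∩ B1) ∩ T) ∪ (B2 \ B1) := by
    intro T y hy
    by_cases h : y ∈ B1
    · exact Or.inl ⟨⟨hy.1, h⟩, hy.2⟩
    · exact Or.inr ⟨hy.1, h⟩
  have i3 : x3 ≤ p + d := by
    have hle : MeasureTheory.volume (B2 ∩ S)
        ≤ MeasureTheory.volume ((B2 ∩ B1) ∩ S) + MeasureTheory.volume (B2 \ B1) :=
      le_trans (MeasureTheory.measure_mono (cover S)) (MeasureTheory.measure_union_le _ _)
    have := ENNReal.toReal_mono (by exact ENNReal.add_ne_top.mpr ⟨f5, f7⟩) hle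
    rwa [ENNReal.toReal_add f5 f7] at this
  have i4 : x4 ≤ q + d := by
    have hsub : B2 \ S ⊆ ((B2 ∩ B1) \ S) ∪ (B2 \ B1) := by
      intro y hy
      by_cases h : y ∈ B1
      · exact Or.inl ⟨⟨hy.1, h⟩, hy.2⟩
      · exact Or.inr ⟨hy.1, h⟩
    have hle : MeasureTheory.volume (B2 \ S)
        ≤ MeasureTheory.volume ((B2 ∩ B1) \ S) + MeasureTheory.volume (B2 \ B1) :=
      le_trans (MeasureTheory.measure_mono hsub) (MeasureTheory.measure_union_le _ _)
    have := ENNReal.toReal_mono (by exact ENNReal.add_ne_top.mpr ⟨f6, f7⟩) hle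
    rwa [ENNReal.toReal_add f6 f7] at this
  -- conclude
  have main : 2 * V + W ≤ 6 * lam * V := by nlinarith [hx1, hx2, hx3, hx4, e1, e2, e3, e4, i3, i4]
  refine ⟨main, ?_⟩
  nlinarith [main, hV0, hW0]
end
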